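/- Let 𝔄 be a hyperassignment, χ a quantifier prefix, and α ∈ {EA, AE}. Then evl^α(dual(𝔄), dual(χ)) ≡ dual(evl^α(𝔄, χ)), where dual(χ) denotes the prefix obtained from χ by replacing each quantifier ∃ by ∀ and vice versa (specifications and propositions unchanged). (Claim proved in the appendix towards Proposition 5: dualizing both the hyperassignment and the quantifier prefix commutes, up to ≡, with the dualization of the evolved hyperassignment.) -/

import Mathlib

namespace GFG

/-- Temporal valuations. -/
abbrev Val : Type := ℕ → Bool

/-- Assignments over a type `AP` of atomic propositions. -/
abbrev Asg (AP : Type*) : Type _ := AP → Val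

section Hyper

variable {X : Type*}

/-- A hyperassignment: a nonempty set of subsets not containing `∅`. -/
def IsHyp (𝔄 : Set (Set X)) : Prop := 𝔄 ≠ ∅ ∧ ∅ ∉ 𝔄

/-- A choice function for `𝔄`. -/
def IsChoice (𝔄 : Set (Set X)) (ϑ : Set X → X) : Prop := ∀ W ∈ 𝔄, ϑ W ∈ W

/-- The dual hyperassignment. -/
def hdual (𝔄 : Set (Set X)) : Set (Set X) :=
  { Y | ∃ ϑ : Set X → X, IsChoice 𝔄 ϑ ∧ Y = ϑ '' 𝔄 }

/-- The preorder `⊑` on hyperassignments. -/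
def hle (𝔄₁ 𝔄₂ : Set (Set X)) : Prop := ∀ W₁ ∈ 𝔄₁, ∃ W₂ ∈ 𝔄₂, W₂ ⊆ W₁

/-- The equivalence `≡` on hyperassignments. -/
def heqv (𝔄₁ 𝔄₂ : Set (Set X)) : Prop := hle 𝔄₁ 𝔄₂ ∧ hle 𝔄₂ 𝔄₁

/-- `par 𝔄`: partitions of `𝔄` into two disjoint parts. -/
def par (𝔄 : Set (Set X)) : Set (Set (Set X) × Set (Set X)) :=
  { pr | pr.1 ∪ pr.2 = 𝔄 ∧ Disjoint pr.1 pr.2 }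

end Hyper

variable {AP : Type*}

/-- `a₁ ≈_p^{>k} a₂`. -/
def ApproxGT (p : AP) (k : ℕ) (a₁ a₂ : Asg AP) : Prop :=
  (∀ q, q ≠ p → a₁ q = a₂ q) ∧ ∀ t ≤ k, a₁ p t = a₂ p t

/-- `a₁ ≈_p^{≥k} a₂`. -/
def ApproxGE (p : AP) (k : ℕ) (a₁ a₂ : Asg AP) : Prop :=
  (∀ q, q ≠ p → a₁ q = a₂ q) ∧ ∀ t < k, a₁ p t = a₂ p t

/-- Quantifier specifications `ς = (B,S)`. -/
abbrev Spec (AP : Type*) := Set AP × Set AP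

/-- A `ς`-functor. -/
def IsSpecFunctor (ς : Spec AP) (F : Asg AP → Val) : Prop :=
  (∀ (k : ℕ) (a₁ a₂ : Asg AP), (∃ p ∈ ς.1, ApproxGT p k a₁ a₂) → F a₁ k = F a₂ k) ∧
  (∀ (k : ℕ) (a₁ a₂ : Asg AP), (∃ p ∈ ς.2, ApproxGE p k a₁ a₂) → F a₁ k = F a₂ k)

variable [DecidableEq AP]

/-- `ext(a,F,p)`. -/
def extAsg (a : Asg AP) (F : Asg AP → Val) (p : AP) : Asg AP :=
  Function.update a p (F a)

/-- `ext(W,F,p)`. -/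
def extSet (W : Set (Asg AP)) (F : Asg AP → Val) (p : AP) : Set (Asg AP) :=
  (fun a => extAsg a F p) '' W

/-- `ext_ς(𝔄,p)`. -/
def extSpec (ς : Spec AP) (𝔄 : Set (Set (Asg AP))) (p : AP) : Set (Set (Asg AP)) :=
  { Y | ∃ W ∈ 𝔄, ∃ F : Asg AP → Val, IsSpecFunctor ς F ∧ Y = extSet W F p }

/-- Alternation flags. -/
inductive Flag : Type
  | EA : Flag
  | AE : Flag
  deriving DecidableEq

/-- The dual flag. -/
def Flag.dual : Flag → Flag
  | .EA => .AE
  | .AE => .EA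

/-- GFG-QPTL formulas (LTL formulas abstracted as arbitrary sets of assignments). -/
inductive Formula (AP : Type*) : Type _ where
  | atom : Set (Asg AP) → Formula AP
  | neg : Formula AP → Formula AP
  | conj : Formula AP → Formula AP → Formula AP
  | disj : Formula AP → Formula AP → Formula AP
  | ex : AP → Spec AP → Formula AP → Formula AP
  | all : AP → Spec AP → Formula AP → Formula AP

/-- The alternating Hodges semantics `𝔄 ⊨^α φ`. -/
def Sat : Formula AP → Flag → Set (Set (Asg AP)) → Prop
  | .atom Ψ, .EA, 𝔄 => ∃ W ∈ 𝔄, W ⊆ Ψ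
  | .atom Ψ, .AE, 𝔄 => ∀ W ∈ 𝔄, W ∩ Ψ ≠ ∅
  | .neg φ, α, 𝔄 => ¬ Sat φ α.dual 𝔄
  | .conj φ₁ φ₂, .EA, 𝔄 =>
      ∀ pr ∈ par 𝔄, (pr.1 ≠ ∅ ∧ Sat φ₁ .EA pr.1) ∨ (pr.2 ≠ ∅ ∧ Sat φ₂ .EA pr.2)
  | .conj φ₁ φ₂, .AE, 𝔄 =>
      ∀ pr ∈ par (hdual 𝔄), (pr.1 ≠ ∅ ∧ Sat φ₁ .EA pr.1) ∨ (pr.2 ≠ ∅ ∧ Sat φ₂ .EA pr.2)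
  | .disj φ₁ φ₂, .AE, 𝔄 =>
      ∃ pr ∈ par 𝔄, (pr.1 ≠ ∅ → Sat φ₁ .AE pr.1) ∧ (pr.2 ≠ ∅ → Sat φ₂ .AE pr.2)
  | .disj φ₁ φ₂, .EA, 𝔄 =>
      ∃ pr ∈ par (hdual 𝔄), (pr.1 ≠ ∅ → Sat φ₁ .AE pr.1) ∧ (pr.2 ≠ ∅ → Sat φ₂ .AE pr.2)
  | .ex p ς φ, .EA, 𝔄 => Sat φ .EA (extSpec ς 𝔄 p)
  | .ex p ς φ, .AE, 𝔄 => Sat φ .EA (extSpec ς (hdual 𝔄) p)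
  | .all p ς φ, .AE, 𝔄 => Sat φ .AE (extSpec ς 𝔄 p)
  | .all p ς φ, .EA, 𝔄 => Sat φ .AE (extSpec ς (hdual 𝔄) p)

/-- Quantifier symbols. -/
inductive Quant : Type
  | qex : Quant
  | qall : Quant
  deriving DecidableEq

/-- Quantifier prefixes: finite lists of triples `(Q, ς, p)`. -/
abbrev QPrefix (AP : Type*) := List (Quant × Spec AP × AP)

/-- `χφ`: the formula obtained by prefixing `φ` with the quantifiers of `χ`. -/
def applyPrefix : QPrefix AP → Formula AP → Formula AP
  | [], φ => φ
  | (Quant.qex, ς, p) :: χ, φ => .ex p ς (applyPrefix χ φ)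
  | (Quant.qall, ς, p) :: χ, φ => .all p ς (applyPrefix χ φ)

/-- `Q` is `α`-coherent iff `(Q,α) ∈ {(∃,EA),(∀,AE)}`. -/
def coherent : Quant → Flag → Bool
  | .qex, .EA => true
  | .qall, .AE => true
  | _, _ => false

/-- The evolution `evl^α(𝔄,χ)` of a hyperassignment along a quantifier prefix. -/
def evl (α : Flag) : Set (Set (Asg AP)) → QPrefix AP → Set (Set (Asg AP))
  | 𝔄, [] => 𝔄
  | 𝔄, (Q, ς, p) :: χ =>
      evl α (if coherent Q α then extSpec ς 𝔄 p else hdual (extSpec ς (hdual 𝔄) p)) χ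

/-- The dual quantifier. -/
def Quant.dual : Quant → Quant
  | .qex => .qall
  | .qall => .qex

/-- The dual prefix: each `∃` is replaced by `∀` and vice versa. -/
def dualPrefix (χ : QPrefix AP) : QPrefix AP :=
  χ.map (fun t => (t.1.dual, t.2.1, t.2.2))

/-! Dualization is an involution up to `≡`, and `dual`, `ext_ς` and evolution all respect `≡`.
Hence, by induction along `χ`, each step of the dualized evolution on `dual 𝔄` agrees with the
corresponding step of the original evolution up to one double dual, which may be cancelled. -/

section Hyper

variable {X : Type*}

theorem hle.refl (𝔄 : Set (Set X)) : hle 𝔄 𝔄 := fun W hW => ⟨W, hW, subset_rfl⟩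

theorem hle.trans {𝔄 𝔅 ℭ : Set (Set X)} (h₁ : hle 𝔄 𝔅) (h₂ : hle 𝔅 ℭ) : hle 𝔄 ℭ := by
  intro W hW
  obtain ⟨W₂, hW₂, hW₂W⟩ := h₁ W hW
  obtain ⟨W₃, hW₃, hW₃W₂⟩ := h₂ W₂ hW₂
  exact ⟨W₃, hW₃, hW₃W₂.trans hW₂W⟩

theorem heqv.refl (𝔄 : Set (Set X)) : heqv 𝔄 𝔄 := ⟨hle.refl 𝔄, hle.refl 𝔄⟩

theorem heqv.symm {𝔄 𝔅 : Set (Set X)} (h : heqv 𝔄 𝔅) : heqv 𝔅 𝔄 := ⟨h.2, h.1⟩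

theorem heqv.trans {𝔄 𝔅 ℭ : Set (Set X)} (h₁ : heqv 𝔄 𝔅) (h₂ : heqv 𝔅 ℭ) : heqv 𝔄 ℭ :=
  ⟨h₁.1.trans h₂.1, h₂.2.trans h₁.2⟩

theorem exists_isChoice_and [Nonempty X] {𝔄 : Set (Set X)} {P : Set X → X → Prop}
    (h : ∀ W ∈ 𝔄, ∃ a ∈ W, P W a) : ∃ ϑ : Set X → X, IsChoice 𝔄 ϑ ∧ ∀ W ∈ 𝔄, P W (ϑ W) := by
  choose! ϑ hϑ hP using h
  exact ⟨ϑ, hϑ, hP⟩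

theorem hdual_anti [Nonempty X] {𝔄 𝔅 : Set (Set X)} (h : hle 𝔄 𝔅) :
    hle (hdual 𝔅) (hdual 𝔄) := by
  rintro _ ⟨ϑ, hϑ, rfl⟩
  have hmeets : ∀ W ∈ 𝔄, ∃ a ∈ W, a ∈ ϑ '' 𝔅 := fun W hW ↦ by
    obtain ⟨W', hW', hW'W⟩ := h W hW
    exact ⟨ϑ W', hW'W (hϑ W' hW'), W', hW', rfl⟩
  obtain ⟨ϑ', hϑ', hϑ'_mem⟩ := exists_isChoice_and hmeets
  exact ⟨ϑ' '' 𝔄, ⟨ϑ', hϑ', rfl⟩, Set.image_subset_iff.2 hϑ'_mem⟩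

theorem hdual_congr [Nonempty X] {𝔄 𝔅 : Set (Set X)} (h : heqv 𝔄 𝔅) :
    heqv (hdual 𝔄) (hdual 𝔅) :=
  ⟨hdual_anti h.2, hdual_anti h.1⟩

theorem hdual_hdual_hle [Nonempty X] (𝔄 : Set (Set X)) : hle (hdual (hdual 𝔄)) 𝔄 := by
  rintro _ ⟨η, hη, rfl⟩
  by_contra! hnot
  -- a choice function avoiding `η '' hdual 𝔄` would give a member of `hdual 𝔄` on which `η` fails
  have havoid : ∀ W ∈ 𝔄, ∃ a ∈ W, a ∉ η '' hdual 𝔄 := fun W hW ↦ Set.not_subset.1 (hnot W hW)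
  obtain ⟨ϑ, hϑ, hϑ_avoid⟩ := exists_isChoice_and havoid
  obtain ⟨W, hW, hWη⟩ := hη _ ⟨ϑ, hϑ, rfl⟩
  exact hϑ_avoid W hW (hWη ▸ ⟨_, ⟨ϑ, hϑ, rfl⟩, rfl⟩)

theorem hle_hdual_hdual [Nonempty X] (𝔄 : Set (Set X)) : hle 𝔄 (hdual (hdual 𝔄)) := by
  intro W hW
  have hmeets : ∀ Z ∈ hdual 𝔄, ∃ a ∈ Z, a ∈ W := by
    rintro _ ⟨ϑ, hϑ, rfl⟩
    exact ⟨ϑ W, ⟨W, hW, rfl⟩, hϑ W hW⟩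
  obtain ⟨η, hη, hηW⟩ := exists_isChoice_and hmeets
  exact ⟨η '' hdual 𝔄, ⟨η, hη, rfl⟩, Set.image_subset_iff.2 hηW⟩

theorem heqv_hdual_hdual [Nonempty X] (𝔄 : Set (Set X)) : heqv (hdual (hdual 𝔄)) 𝔄 :=
  ⟨hdual_hdual_hle 𝔄, hle_hdual_hdual 𝔄⟩

end Hyper

theorem extSpec_mono {ς : Spec AP} {𝔄 𝔅 : Set (Set (Asg AP))} {p : AP} (h : hle 𝔄 𝔅) :
    hle (extSpec ς 𝔄 p) (extSpec ς 𝔅 p) := by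
  rintro _ ⟨W, hW, F, hF, rfl⟩
  obtain ⟨W', hW', hW'W⟩ := h W hW
  exact ⟨extSet W' F p, ⟨W', hW', F, hF, rfl⟩, Set.image_mono hW'W⟩

theorem extSpec_congr {ς : Spec AP} {𝔄 𝔅 : Set (Set (Asg AP))} {p : AP} (h : heqv 𝔄 𝔅) :
    heqv (extSpec ς 𝔄 p) (extSpec ς 𝔅 p) :=
  ⟨extSpec_mono h.1, extSpec_mono h.2⟩

theorem evl_congr {𝔄 𝔅 : Set (Set (Asg AP))} (h : heqv 𝔄 𝔅) (α : Flag) (χ : QPrefix AP) :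
    heqv (evl α 𝔄 χ) (evl α 𝔅 χ) := by
  induction χ generalizing 𝔄 𝔅 with
  | nil => exact h
  | cons step χ ih =>
    obtain ⟨Q, ς, p⟩ := step
    cases hQ : coherent Q α <;> simp only [evl, hQ, Bool.false_eq_true, if_false, if_true]
    · exact ih (hdual_congr (extSpec_congr (hdual_congr h)))
    · exact ih (extSpec_congr h)

theorem coherent_dual (Q : Quant) (α : Flag) : coherent Q.dual α = !coherent Q α := by
  cases Q <;> cases α <;> rfl

theorem evl_dual_general (𝔄 : Set (Set (Asg AP)))
    (χ : QPrefix AP) (α : Flag) :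
    heqv (evl α (hdual 𝔄) (dualPrefix χ)) (hdual (evl α 𝔄 χ)) := by
  induction χ generalizing 𝔄 with
  | nil => exact heqv.refl _
  | cons step χ ih =>
    obtain ⟨Q, ς, p⟩ := step
    cases hQ : coherent Q α <;>
      simp only [dualPrefix, List.map_cons, evl, coherent_dual, hQ, Bool.not_true, Bool.not_false,
        Bool.false_eq_true, if_false, if_true] at ih ⊢
    · exact (evl_congr (heqv_hdual_hdual _) α _).symm.trans (ih _)
    · exact (evl_congr (hdual_congr (extSpec_congr (heqv_hdual_hdual 𝔄))) α _).trans (ih _)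

/-- Dualizing both the hyperassignment and the quantifier prefix commutes,
up to `≡`, with dualization of the evolved hyperassignment. -/
theorem evl_dual (𝔄 : Set (Set (Asg AP))) (h : IsHyp 𝔄)
    (χ : QPrefix AP) (α : Flag) :
    heqv (evl α (hdual 𝔄) (dualPrefix χ)) (hdual (evl α 𝔄 χ)) :=
  evl_dual_general 𝔄 χ α

end GFG
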